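/- arXiv:2105.02537 — 2 statements merged into one kernel-verified Lean document; each statement's English description precedes it below -/
import Mathlib

section
/- In a weak brace S, for all a, b ∈ S it holds that a∘b = λ_a(b) ∘ ρ_b(a), where λ_a(b) = a∘(a⁻+b) and ρ_b(a) = (a⁻+b)⁻∘b. Equivalently, a∘(a⁻+b)∘(a⁻+b)⁻∘b = a∘b. -/
/-!
With `c = a⁻ + b`, associativity reduces the identity to `a ∘ (c ∘ c⁻) = a ∘ (b ∘ b⁻)`.
Idempotents of an inverse semigroup commute, so negation reverses sums and
`c ∘ c⁻ = -c + c = -b + (-a⁻ + a⁻) + b = -b + a⁻ ∘ a + b`. Distributivity then lets `a ∘ -`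
absorb the middle term `a⁻ ∘ a`, leaving `a ∘ (-b + b) = a ∘ (b ∘ b⁻)`.
-/

/-- A weak (left) brace: `(S,+)` and `(S,∘)` are inverse semigroups (with designated
inverse maps `neg` and `inv`), satisfying `a∘(b+c) = a∘b - a + a∘c` and `a∘a⁻ = -a + a`. -/
structure WeakBrace (S : Type*) where
  add : S → S → S
  mul : S → S → S
  neg : S → S
  inv : S → S
  add_assoc : ∀ a b c : S, add (add a b) c = add a (add b c)
  mul_assoc : ∀ a b c : S, mul (mul a b) c = mul a (mul b c)
  add_neg_add : ∀ a : S, add (add a (neg a)) a = a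
  neg_add_neg : ∀ a : S, add (add (neg a) a) (neg a) = neg a
  neg_unique : ∀ a x : S, add (add a x) a = a → add (add x a) x = x → x = neg a
  mul_inv_mul : ∀ a : S, mul (mul a (inv a)) a = a
  inv_mul_inv : ∀ a : S, mul (mul (inv a) a) (inv a) = inv a
  inv_unique : ∀ a x : S, mul (mul a x) a = a → mul (mul x a) x = x → x = inv a
  distrib : ∀ a b c : S, mul a (add b c) = add (add (mul a b) (neg a)) (mul a c)
  mul_inv_eq : ∀ a : S, mul a (inv a) = add (neg a) a

structure IsInverseSemigroup {S : Type*} (op : S → S → S) (iv : S → S) : Prop where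
  assoc : ∀ a b c : S, op (op a b) c = op a (op b c)
  op_iv_op : ∀ a : S, op (op a (iv a)) a = a
  iv_op_iv : ∀ a : S, op (op (iv a) a) (iv a) = iv a
  eq_iv_of : ∀ a x : S, op (op a x) a = a → op (op x a) x = x → x = iv a

namespace IsInverseSemigroup

variable {S : Type*} {op : S → S → S} {iv : S → S} (h : IsInverseSemigroup op iv)

local infixl:70 " ⋆ " => op

include h

theorem iv_iv (a : S) : iv (iv a) = a :=
  (h.eq_iv_of (iv a) a (h.iv_op_iv a) (h.op_iv_op a)).symm

theorem iv_eq_self_of_idem {e : S} (he : e ⋆ e = e) : iv e = e :=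
  (h.eq_iv_of e e (by rw [he, he]) (by rw [he, he])).symm

theorem idem_op_op {e : S} (he : e ⋆ e = e) (x : S) : e ⋆ (e ⋆ x) = e ⋆ x := by
  rw [← h.assoc, he]

theorem op_idem {e f : S} (he : e ⋆ e = e) (hf : f ⋆ f = f) : e ⋆ f ⋆ (e ⋆ f) = e ⋆ f := by
  set x := iv (e ⋆ f)
  -- `f ⋆ x ⋆ e` is also an inverse of `e ⋆ f`
  have hx : f ⋆ x ⋆ e = x := by
    apply h.eq_iv_of
    · simpa only [h.assoc, h.idem_op_op he, h.idem_op_op hf] using h.op_iv_op (e ⋆ f)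
    · simpa only [h.assoc, h.idem_op_op he, h.idem_op_op hf] using
        congrArg (fun y => f ⋆ y ⋆ e) (h.iv_op_iv (e ⋆ f))
  have hxx : x ⋆ x = x :=
    calc x ⋆ x = f ⋆ (x ⋆ (e ⋆ f) ⋆ x) ⋆ e := by
          conv_lhs => rw [← hx]
          simp only [h.assoc]
      _ = x := by rw [h.iv_op_iv, hx]
  have hef : e ⋆ f = x := by rw [← h.iv_eq_self_of_idem hxx, h.iv_iv]
  rw [hef, hxx]

theorem idem_comm {e f : S} (he : e ⋆ e = e) (hf : f ⋆ f = f) : e ⋆ f = f ⋆ e := by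
  have hef := h.op_idem he hf
  have hfe := h.op_idem hf he
  have hinv : f ⋆ e = iv (e ⋆ f) := by
    apply h.eq_iv_of
    · simpa only [h.assoc, h.idem_op_op he, h.idem_op_op hf] using hef
    · simpa only [h.assoc, h.idem_op_op he, h.idem_op_op hf] using hfe
  rw [hinv, h.iv_eq_self_of_idem hef]

theorem iv_op (a b : S) : iv (a ⋆ b) = iv b ⋆ iv a := by
  have hbb : b ⋆ iv b ⋆ (b ⋆ iv b) = b ⋆ iv b := by rw [← h.assoc, h.op_iv_op]
  have haa : iv a ⋆ a ⋆ (iv a ⋆ a) = iv a ⋆ a := by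
    rw [h.assoc, ← h.assoc a, h.op_iv_op]
  have hcomm := h.idem_comm hbb haa
  refine (h.eq_iv_of (a ⋆ b) (iv b ⋆ iv a) ?_ ?_).symm
  · calc a ⋆ b ⋆ (iv b ⋆ iv a) ⋆ (a ⋆ b) = a ⋆ (b ⋆ iv b ⋆ (iv a ⋆ a)) ⋆ b := by
          simp only [h.assoc]
      _ = a ⋆ iv a ⋆ a ⋆ (b ⋆ iv b ⋆ b) := by rw [hcomm]; simp only [h.assoc]
      _ = a ⋆ b := by rw [h.op_iv_op, h.op_iv_op]
  · calc iv b ⋆ iv a ⋆ (a ⋆ b) ⋆ (iv b ⋆ iv a) = iv b ⋆ (iv a ⋆ a ⋆ (b ⋆ iv b)) ⋆ iv a := by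
          simp only [h.assoc]
      _ = iv b ⋆ b ⋆ iv b ⋆ (iv a ⋆ a ⋆ iv a) := by rw [← hcomm]; simp only [h.assoc]
      _ = iv b ⋆ iv a := by rw [h.iv_op_iv, h.iv_op_iv]

end IsInverseSemigroup

namespace WeakBrace

variable {S : Type*} (W : WeakBrace S)

theorem isInverseSemigroup_add : IsInverseSemigroup W.add W.neg :=
  ⟨W.add_assoc, W.add_neg_add, W.neg_add_neg, W.neg_unique⟩

theorem isInverseSemigroup_mul : IsInverseSemigroup W.mul W.inv :=
  ⟨W.mul_assoc, W.mul_inv_mul, W.inv_mul_inv, W.inv_unique⟩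

theorem mul_inv_add (x y : S) :
    W.mul (W.add x y) (W.inv (W.add x y)) = W.add (W.neg y) (W.add (W.mul x (W.inv x)) y) := by
  rw [W.mul_inv_eq, W.mul_inv_eq, W.isInverseSemigroup_add.iv_op]
  simp only [W.add_assoc]

theorem mul_add_inv_mul_add (a x y : S) :
    W.mul a (W.add x (W.add (W.mul (W.inv a) a) y)) = W.mul a (W.add x y) := by
  rw [W.distrib a x, W.distrib a, ← W.mul_assoc a, W.mul_inv_mul, W.distrib a x]
  simp only [W.add_assoc]
  rw [← W.add_assoc (W.neg a) a, ← W.add_assoc (W.add (W.neg a) a), W.neg_add_neg]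

end WeakBrace

theorem weakBrace_lambda_mul_rho {S : Type*} (W : WeakBrace S) :
    ∀ a b : S, W.mul (W.mul (W.mul a (W.add (W.inv a) b)) (W.inv (W.add (W.inv a) b))) b
      = W.mul a b := by
  intro a b
  calc W.mul (W.mul (W.mul a (W.add (W.inv a) b)) (W.inv (W.add (W.inv a) b))) b
      = W.mul (W.mul a (W.add (W.neg b) (W.add (W.mul (W.inv a) a) b))) b := by
        rw [W.mul_assoc a, W.mul_inv_add, W.isInverseSemigroup_mul.iv_iv]
    _ = W.mul (W.mul a (W.mul b (W.inv b))) b := by rw [W.mul_add_inv_mul_add, W.mul_inv_eq]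
    _ = W.mul a b := by rw [W.mul_assoc a, W.mul_inv_mul]
end

section
/- Let S be a weak brace, r the map r(a,b) = (a∘(a⁻+b), (a⁻+b)⁻∘b) and rᵒᵖ the map rᵒᵖ(a,b) = (a∘b - a, (a∘b - a)⁻∘a∘b). Then r rᵒᵖ r = r, rᵒᵖ r rᵒᵖ = rᵒᵖ, and r rᵒᵖ = rᵒᵖ r; moreover (r rᵒᵖ)(a,b) = (a∘b∘b⁻, a⁻∘a∘b). -/
class InverseSemigroup (S : Type*) extends Semigroup S, Inv S where
  mul_inv_mul_self : ∀ a : S, a * a⁻¹ * a = a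
  inv_mul_inv_self : ∀ a : S, a⁻¹ * a * a⁻¹ = a⁻¹
  eq_inv_of_mul_mul : ∀ a x : S, a * x * a = a → x * a * x = x → x = a⁻¹

namespace InverseSemigroup

variable {S : Type*} [InverseSemigroup S]

theorem inv_inv (a : S) : a⁻¹⁻¹ = a :=
  (eq_inv_of_mul_mul a⁻¹ a (inv_mul_inv_self a) (mul_inv_mul_self a)).symm

theorem inv_eq_self_of_isIdempotentElem {e : S} (he : IsIdempotentElem e) : e⁻¹ = e :=
  (eq_inv_of_mul_mul e e (by rw [he.eq, he.eq]) (by rw [he.eq, he.eq])).symm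

theorem isIdempotentElem_mul_inv_self (a : S) : IsIdempotentElem (a * a⁻¹) := by
  rw [IsIdempotentElem, ← mul_assoc, mul_inv_mul_self]

theorem isIdempotentElem_inv_mul_self (a : S) : IsIdempotentElem (a⁻¹ * a) := by
  rw [IsIdempotentElem, ← mul_assoc, inv_mul_inv_self]

theorem isIdempotentElem_mul {e f : S} (he : IsIdempotentElem e) (hf : IsIdempotentElem f) :
    IsIdempotentElem (e * f) := by
  have hx : f * (e * f)⁻¹ * e = (e * f)⁻¹ := by
    refine eq_inv_of_mul_mul _ _ ?_ ?_
    · calc e * f * (f * (e * f)⁻¹ * e) * (e * f) = e * (f * f) * (e * f)⁻¹ * (e * e) * f := by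
            simp only [mul_assoc]
        _ = e * f := by
            rw [he.eq, hf.eq]; simpa only [mul_assoc] using mul_inv_mul_self (e * f)
    · calc f * (e * f)⁻¹ * e * (e * f) * (f * (e * f)⁻¹ * e)
            = f * ((e * f)⁻¹ * (e * e) * (f * f) * (e * f)⁻¹) * e := by simp only [mul_assoc]
        _ = f * (e * f)⁻¹ * e := by
            rw [he.eq, hf.eq, mul_assoc _ e f, inv_mul_inv_self, mul_assoc]
  have hxx : IsIdempotentElem (e * f)⁻¹ :=
    calc (e * f)⁻¹ * (e * f)⁻¹ = f * ((e * f)⁻¹ * (e * f) * (e * f)⁻¹) * e := by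
          nth_rw 1 [← hx]; nth_rw 2 [← hx]; simp only [mul_assoc]
      _ = (e * f)⁻¹ := by rw [inv_mul_inv_self, hx]
  rw [← inv_inv (e * f), inv_eq_self_of_isIdempotentElem hxx]
  exact hxx

theorem mul_comm_of_isIdempotentElem {e f : S} (he : IsIdempotentElem e)
    (hf : IsIdempotentElem f) : e * f = f * e := by
  have hef := isIdempotentElem_mul he hf
  have hfe := isIdempotentElem_mul hf he
  have : f * e = (e * f)⁻¹ := by
    refine eq_inv_of_mul_mul _ _ ?_ ?_
    · calc e * f * (f * e) * (e * f) = e * (f * f) * (e * e) * f := by simp only [mul_assoc]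
        _ = e * f := by rw [he.eq, hf.eq]; simpa only [mul_assoc] using hef.eq
    · calc f * e * (e * f) * (f * e) = f * (e * e) * (f * f) * e := by simp only [mul_assoc]
        _ = f * e := by rw [he.eq, hf.eq]; simpa only [mul_assoc] using hfe.eq
  rw [this, inv_eq_self_of_isIdempotentElem hef]

theorem mul_inv_rev (a b : S) : (a * b)⁻¹ = b⁻¹ * a⁻¹ := by
  have h := mul_comm_of_isIdempotentElem (isIdempotentElem_mul_inv_self b)
    (isIdempotentElem_inv_mul_self a)
  refine (eq_inv_of_mul_mul _ _ ?_ ?_).symm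
  · calc a * b * (b⁻¹ * a⁻¹) * (a * b) = a * (b * b⁻¹ * (a⁻¹ * a)) * b := by
          simp only [mul_assoc]
      _ = a * a⁻¹ * a * (b * b⁻¹ * b) := by rw [h]; simp only [mul_assoc]
      _ = a * b := by rw [mul_inv_mul_self, mul_inv_mul_self]
  · calc b⁻¹ * a⁻¹ * (a * b) * (b⁻¹ * a⁻¹) = b⁻¹ * (a⁻¹ * a * (b * b⁻¹)) * a⁻¹ := by
          simp only [mul_assoc]
      _ = b⁻¹ * b * b⁻¹ * (a⁻¹ * a * a⁻¹) := by rw [← h]; simp only [mul_assoc]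
      _ = b⁻¹ * a⁻¹ := by rw [inv_mul_inv_self, inv_mul_inv_self]

theorem isIdempotentElem_inv_mul_mul {e : S} (he : IsIdempotentElem e) (b : S) :
    IsIdempotentElem (b⁻¹ * e * b) := by
  have h := mul_comm_of_isIdempotentElem he (isIdempotentElem_mul_inv_self b)
  calc b⁻¹ * e * b * (b⁻¹ * e * b) = b⁻¹ * (e * (b * b⁻¹)) * e * b := by simp only [mul_assoc]
    _ = b⁻¹ * b * b⁻¹ * (e * e) * b := by rw [h]; simp only [mul_assoc]
    _ = b⁻¹ * e * b := by rw [inv_mul_inv_self, he.eq]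

theorem mul_inv_mul_mul {e : S} (he : IsIdempotentElem e) (b : S) :
    b * (b⁻¹ * e * b) = e * b := by
  have h := mul_comm_of_isIdempotentElem he (isIdempotentElem_mul_inv_self b)
  calc b * (b⁻¹ * e * b) = b * b⁻¹ * e * b := by simp only [mul_assoc]
    _ = e * (b * b⁻¹ * b) := by rw [← h]; simp only [mul_assoc]
    _ = e * b := by rw [mul_inv_mul_self]

theorem mul_mul_inv_of_isIdempotentElem {e : S} (he : IsIdempotentElem e) (b : S) :
    e * b * (e * b)⁻¹ = e * (b * b⁻¹) := by
  have h := mul_comm_of_isIdempotentElem he (isIdempotentElem_mul_inv_self b)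
  rw [mul_inv_rev, inv_eq_self_of_isIdempotentElem he]
  calc e * b * (b⁻¹ * e) = e * (b * b⁻¹ * e) := by simp only [mul_assoc]
    _ = e * (b * b⁻¹) := by rw [← h, ← mul_assoc, he.eq]

theorem mul_mul_inv_eq (a b : S) : a * b * b⁻¹ = a * b * (a * b)⁻¹ * a := by
  have h := mul_comm_of_isIdempotentElem (isIdempotentElem_inv_mul_self a)
    (isIdempotentElem_mul_inv_self b)
  calc a * b * b⁻¹ = a * (a⁻¹ * a * (b * b⁻¹)) := by
        rw [← mul_assoc a (a⁻¹ * a), ← mul_assoc a a⁻¹, mul_inv_mul_self, mul_assoc]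
    _ = a * b * (a * b)⁻¹ * a := by rw [h, mul_inv_rev]; simp only [mul_assoc]

theorem inv_mul_mul_inv_mul (a b : S) : (a * b * b⁻¹)⁻¹ * (a * b) = a⁻¹ * a * b := by
  have h := mul_comm_of_isIdempotentElem (isIdempotentElem_mul_inv_self b)
    (isIdempotentElem_inv_mul_self a)
  rw [mul_assoc a b, mul_inv_rev,
    inv_eq_self_of_isIdempotentElem (isIdempotentElem_mul_inv_self b)]
  calc b * b⁻¹ * a⁻¹ * (a * b) = b * b⁻¹ * (a⁻¹ * a) * b := by simp only [mul_assoc]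
    _ = a⁻¹ * a * (b * b⁻¹ * b) := by rw [h]; simp only [mul_assoc]
    _ = a⁻¹ * a * b := by rw [mul_inv_mul_self]

variable (S) in
def IsClifford : Prop := ∀ a : S, a * a⁻¹ = a⁻¹ * a

theorem IsClifford.mul_comm_of_isIdempotentElem (hc : IsClifford S) {e : S}
    (he : IsIdempotentElem e) (a : S) : e * a = a * e := by
  have h := InverseSemigroup.mul_comm_of_isIdempotentElem he (isIdempotentElem_inv_mul_self a)
  have hconj : a * e * a⁻¹ = e * (a * a⁻¹) :=
    calc a * e * a⁻¹ = a * e * (a * e)⁻¹ := by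
          rw [mul_inv_rev, inv_eq_self_of_isIdempotentElem he, ← mul_assoc (a * e) e,
            mul_assoc a e e, he.eq]
      _ = (a * e)⁻¹ * (a * e) := hc _
      _ = e * (a⁻¹ * a) * e := by
          rw [mul_inv_rev, inv_eq_self_of_isIdempotentElem he]; simp only [mul_assoc]
      _ = e * (a * a⁻¹) := by rw [mul_assoc, ← h, ← mul_assoc, he.eq, hc a]
  calc e * a = e * (a * a⁻¹) * a := by rw [mul_assoc e, mul_inv_mul_self]
    _ = a * (e * (a⁻¹ * a)) := by rw [← hconj]; simp only [mul_assoc]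
    _ = a * e := by rw [h, ← mul_assoc, ← mul_assoc, mul_inv_mul_self]

theorem IsClifford.inv_mul_mul (hc : IsClifford S) (a b : S) :
    (a * b)⁻¹ * (a * b) = a⁻¹ * a * (b⁻¹ * b) := by
  rw [mul_inv_rev]
  calc b⁻¹ * a⁻¹ * (a * b) = b⁻¹ * (a⁻¹ * a * b) := by simp only [mul_assoc]
    _ = b⁻¹ * b * (a⁻¹ * a) := by
        rw [hc.mul_comm_of_isIdempotentElem (isIdempotentElem_inv_mul_self a)]
        simp only [mul_assoc]
    _ = a⁻¹ * a * (b⁻¹ * b) :=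
        InverseSemigroup.mul_comm_of_isIdempotentElem (isIdempotentElem_inv_mul_self b)
          (isIdempotentElem_inv_mul_self a)

end InverseSemigroup

namespace WeakBrace

open InverseSemigroup

variable {S : Type*} (W : WeakBrace S)

abbrev addInverseSemigroup : InverseSemigroup S where
  mul := W.add
  mul_assoc := W.add_assoc
  inv := W.neg
  mul_inv_mul_self := W.add_neg_add
  inv_mul_inv_self := W.neg_add_neg
  eq_inv_of_mul_mul := W.neg_unique

abbrev mulInverseSemigroup : InverseSemigroup S where
  mul := W.mul
  mul_assoc := W.mul_assoc
  inv := W.inv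
  mul_inv_mul_self := W.mul_inv_mul
  inv_mul_inv_self := W.inv_mul_inv
  eq_inv_of_mul_mul := W.inv_unique

local infixl:65 " ⊹ " => WeakBrace.add W
local infixl:70 " ⊡ " => WeakBrace.mul W
local prefix:max "∼" => WeakBrace.neg W
local postfix:max "⁻" => WeakBrace.inv W

theorem neg_neg (a : S) : ∼∼a = a := @InverseSemigroup.inv_inv _ W.addInverseSemigroup a

theorem neg_add_rev (a b : S) : ∼(a ⊹ b) = ∼b ⊹ ∼a :=
  @InverseSemigroup.mul_inv_rev _ W.addInverseSemigroup a b

theorem neg_eq_self {e : S} (he : e ⊹ e = e) : ∼e = e :=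
  @inv_eq_self_of_isIdempotentElem _ W.addInverseSemigroup e he

theorem neg_add_idem (a : S) : ∼a ⊹ a ⊹ (∼a ⊹ a) = ∼a ⊹ a :=
  @isIdempotentElem_inv_mul_self _ W.addInverseSemigroup a

theorem add_neg_idem (a : S) : a ⊹ ∼a ⊹ (a ⊹ ∼a) = a ⊹ ∼a :=
  @isIdempotentElem_mul_inv_self _ W.addInverseSemigroup a

theorem add_idem_of_idem {e f : S} (he : e ⊹ e = e) (hf : f ⊹ f = f) :
    e ⊹ f ⊹ (e ⊹ f) = e ⊹ f :=
  @isIdempotentElem_mul _ W.addInverseSemigroup e f he hf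

theorem add_comm_of_idem {e f : S} (he : e ⊹ e = e) (hf : f ⊹ f = f) : e ⊹ f = f ⊹ e :=
  @InverseSemigroup.mul_comm_of_isIdempotentElem _ W.addInverseSemigroup e f he hf

theorem inv_inv (a : S) : a⁻⁻ = a := @InverseSemigroup.inv_inv _ W.mulInverseSemigroup a

theorem mul_inv_rev (a b : S) : (a ⊡ b)⁻ = b⁻ ⊡ a⁻ :=
  @InverseSemigroup.mul_inv_rev _ W.mulInverseSemigroup a b

theorem inv_eq_self {e : S} (he : e ⊡ e = e) : e⁻ = e :=
  @inv_eq_self_of_isIdempotentElem _ W.mulInverseSemigroup e he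

theorem mul_inv_idem (a : S) : a ⊡ a⁻ ⊡ (a ⊡ a⁻) = a ⊡ a⁻ :=
  @isIdempotentElem_mul_inv_self _ W.mulInverseSemigroup a

theorem inv_mul_idem (a : S) : a⁻ ⊡ a ⊡ (a⁻ ⊡ a) = a⁻ ⊡ a :=
  @isIdempotentElem_inv_mul_self _ W.mulInverseSemigroup a

theorem mul_idem_of_idem {e f : S} (he : e ⊡ e = e) (hf : f ⊡ f = f) :
    e ⊡ f ⊡ (e ⊡ f) = e ⊡ f :=
  @isIdempotentElem_mul _ W.mulInverseSemigroup e f he hf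

theorem mul_comm_of_idem {e f : S} (he : e ⊡ e = e) (hf : f ⊡ f = f) : e ⊡ f = f ⊡ e :=
  @InverseSemigroup.mul_comm_of_isIdempotentElem _ W.mulInverseSemigroup e f he hf

theorem inv_mul_mul_idem {e : S} (he : e ⊡ e = e) (b : S) :
    b⁻ ⊡ e ⊡ b ⊡ (b⁻ ⊡ e ⊡ b) = b⁻ ⊡ e ⊡ b :=
  @isIdempotentElem_inv_mul_mul _ W.mulInverseSemigroup e he b

theorem mul_inv_mul_mul {e : S} (he : e ⊡ e = e) (b : S) : b ⊡ (b⁻ ⊡ e ⊡ b) = e ⊡ b :=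
  @InverseSemigroup.mul_inv_mul_mul _ W.mulInverseSemigroup e he b

theorem mul_mul_inv_of_idem {e : S} (he : e ⊡ e = e) (b : S) :
    e ⊡ b ⊡ (e ⊡ b)⁻ = e ⊡ (b ⊡ b⁻) :=
  @mul_mul_inv_of_isIdempotentElem _ W.mulInverseSemigroup e he b

theorem mul_mul_inv_eq (a b : S) : a ⊡ b ⊡ b⁻ = a ⊡ b ⊡ (a ⊡ b)⁻ ⊡ a :=
  @InverseSemigroup.mul_mul_inv_eq _ W.mulInverseSemigroup a b

theorem inv_mul_mul_inv_mul (a b : S) : (a ⊡ b ⊡ b⁻)⁻ ⊡ (a ⊡ b) = a⁻ ⊡ a ⊡ b :=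
  @InverseSemigroup.inv_mul_mul_inv_mul _ W.mulInverseSemigroup a b

theorem inv_mul_eq (a : S) : a⁻ ⊡ a = ∼(a⁻) ⊹ a⁻ := by
  simpa only [W.inv_inv] using W.mul_inv_eq a⁻

theorem mul_inv_add_s15 (a b : S) : a ⊡ (a⁻ ⊹ b) = ∼a ⊹ a ⊡ b := by
  rw [W.distrib, W.mul_inv_eq, W.neg_add_neg]

theorem neg_mul (a b : S) : ∼(a ⊡ b) = ∼a ⊹ a ⊡ ∼b ⊹ ∼a := by
  have h₁ := congrArg (W.mul a) (W.add_neg_add b)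
  have h₂ := congrArg (fun x => ∼a ⊹ x ⊹ ∼a) (congrArg (W.mul a) (W.neg_add_neg b))
  simp only [W.distrib] at h₁ h₂
  refine (W.neg_unique _ _ ?_ ?_).symm
  · simpa only [W.add_assoc] using h₁
  · simpa only [W.add_assoc] using h₂

theorem mul_neg (a b : S) : a ⊡ ∼b = a ⊹ ∼(a ⊡ b) ⊹ a := by
  have h := congrArg W.neg (W.neg_mul a ∼b)
  rwa [W.neg_neg, W.neg_neg, W.neg_add_rev, W.neg_add_rev, W.neg_neg, ← W.add_assoc] at h

theorem add_neg_eq_neg_add (a : S) : a ⊹ ∼a = ∼a ⊹ a := by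
  have key : ∀ x : S, ∼x ⊹ x = x ⊹ ∼x ⊹ (∼x ⊹ x) := by
    intro x
    have hx : x ⊡ ∼(x⁻) = x ⊹ x := by
      rw [W.mul_neg, W.mul_inv_eq, W.neg_eq_self (W.neg_add_idem x), ← W.add_assoc,
        W.add_neg_add]
    calc ∼x ⊹ x = x ⊡ ∼∼(x⁻) := by rw [W.neg_neg, W.mul_inv_eq]
      _ = x ⊹ (∼x ⊹ ∼x) ⊹ x := by rw [W.mul_neg, hx, W.neg_add_rev]
      _ = x ⊹ ∼x ⊹ (∼x ⊹ x) := by simp only [W.add_assoc]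
  have h := key ∼a
  rw [W.neg_neg] at h
  calc a ⊹ ∼a = ∼a ⊹ a ⊹ (a ⊹ ∼a) := h
    _ = a ⊹ ∼a ⊹ (∼a ⊹ a) := W.add_comm_of_idem (W.neg_add_idem a) (W.add_neg_idem a)
    _ = ∼a ⊹ a := (key a).symm

theorem isClifford_add : @IsClifford S W.addInverseSemigroup := W.add_neg_eq_neg_add

theorem idem_add_comm {e : S} (he : e ⊹ e = e) (a : S) : e ⊹ a = a ⊹ e :=
  @IsClifford.mul_comm_of_isIdempotentElem _ W.addInverseSemigroup W.isClifford_add e he a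

theorem neg_add_add (a b : S) : ∼(a ⊹ b) ⊹ (a ⊹ b) = ∼a ⊹ a ⊹ (∼b ⊹ b) :=
  @IsClifford.inv_mul_mul _ W.addInverseSemigroup W.isClifford_add a b

theorem neg_add_self_add (a : S) : ∼a ⊹ a ⊹ a = a := by
  rw [← W.add_neg_eq_neg_add, W.add_neg_add]

theorem neg_add_self_add_mul (a b : S) : ∼a ⊹ a ⊹ a ⊡ b = a ⊡ b := by
  have hsand : a ⊡ b = ∼a ⊹ a ⊹ a ⊡ b ⊹ (∼a ⊹ a) :=
    calc a ⊡ b = a ⊡ ∼∼b := by rw [W.neg_neg]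
      _ = a ⊹ ∼a ⊹ a ⊡ b ⊹ (∼a ⊹ a) := by
          rw [W.mul_neg a ∼b, W.mul_neg, W.neg_add_rev, W.neg_add_rev, W.neg_neg]
          simp only [W.add_assoc]
      _ = ∼a ⊹ a ⊹ a ⊡ b ⊹ (∼a ⊹ a) := by rw [W.add_neg_eq_neg_add]
  calc ∼a ⊹ a ⊹ a ⊡ b = ∼a ⊹ a ⊹ (∼a ⊹ a ⊹ a ⊡ b ⊹ (∼a ⊹ a)) := by rw [← hsand]
    _ = ∼a ⊹ a ⊹ (∼a ⊹ a) ⊹ a ⊡ b ⊹ (∼a ⊹ a) := by simp only [W.add_assoc]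
    _ = a ⊡ b := by rw [W.neg_add_idem, ← hsand]

theorem add_neg_add_mul (a b : S) : a ⊹ (∼a ⊹ a ⊡ b) = a ⊡ b := by
  rw [← W.add_assoc, W.add_neg_eq_neg_add, W.neg_add_self_add_mul]

theorem mul_self_of_add_self {e : S} (he : e ⊹ e = e) : e ⊡ e = e := by
  have h : e ⊡ e⁻ = e := by rw [W.mul_inv_eq, W.neg_eq_self he, he]
  calc e ⊡ e = e ⊡ e⁻ ⊡ (e ⊡ e⁻) := by rw [h]
    _ = e := by rw [W.mul_inv_idem, h]

theorem add_self_of_mul_self {e : S} (he : e ⊡ e = e) : e ⊹ e = e := by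
  have h : ∼e ⊹ e = e := by rw [← W.mul_inv_eq, W.inv_eq_self he, he]
  calc e ⊹ e = ∼e ⊹ e ⊹ (∼e ⊹ e) := by rw [h]
    _ = e := by rw [W.neg_add_idem, h]

/- For `h = p + q` and `g = p ∘ q` one gets `h ∘ p = h ∘ q = g`, so `h = h ∘ h = g + h + g = g`. -/
theorem mul_eq_add_of_idem {p q : S} (hp : p ⊹ p = p) (hq : q ⊹ q = q) : p ⊡ q = p ⊹ q := by
  have hp' := W.mul_self_of_add_self hp
  have hq' := W.mul_self_of_add_self hq
  have hh := W.add_idem_of_idem hp hq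
  have hg : p ⊡ q ⊹ p ⊡ q = p ⊡ q := W.add_self_of_mul_self (W.mul_idem_of_idem hp' hq')
  have hpg : p ⊹ p ⊡ q = p ⊡ q := by
    simpa only [W.neg_eq_self hp, hp] using W.neg_add_self_add_mul p q
  have hqg : q ⊹ p ⊡ q = p ⊡ q := by
    simpa only [W.neg_eq_self hq, hq, W.mul_comm_of_idem hq' hp'] using W.neg_add_self_add_mul q p
  have hph : (p ⊹ q) ⊡ p = p ⊡ q := by
    rw [W.mul_comm_of_idem (W.mul_self_of_add_self hh) hp', W.distrib, hp', W.neg_eq_self hp, hp,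
      hpg]
  have hqh : (p ⊹ q) ⊡ q = p ⊡ q := by
    rw [W.mul_comm_of_idem (W.mul_self_of_add_self hh) hq', W.distrib, hq', W.neg_eq_self hq,
      W.add_assoc, hq, W.mul_comm_of_idem hq' hp', ← W.idem_add_comm hq, hqg]
  calc p ⊡ q = p ⊹ q ⊹ p ⊡ q := by rw [W.add_assoc, hqg, hpg]
    _ = (p ⊹ q) ⊡ p ⊹ ∼(p ⊹ q) ⊹ (p ⊹ q) ⊡ q := by
        rw [hph, hqh, W.neg_eq_self hh, W.idem_add_comm hg (p ⊹ q),
          W.add_assoc (p ⊹ q) (p ⊡ q) (p ⊡ q), hg]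
    _ = (p ⊹ q) ⊡ (p ⊹ q) := (W.distrib _ _ _).symm
    _ = p ⊹ q := W.mul_self_of_add_self hh

/- `e ∘ b = b ∘ f` with `f = b⁻ ∘ e ∘ b` idempotent, so `κ = -b + e ∘ b` is an additive idempotent
with `e ∘ b = κ + b`. Computing `(e ∘ b)⁰` additively gives `κ + b⁰`, multiplicatively
`e ∘ b ∘ b⁻ ∘ e = e + b⁰`; hence `e ∘ b = κ + b⁰ + b = e + b⁰ + b = e + b`. -/
theorem idem_mul_eq_add {e : S} (he : e ⊹ e = e) (b : S) : e ⊡ b = e ⊹ b := by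
  have he' := W.mul_self_of_add_self he
  have hf := W.add_self_of_mul_self (W.inv_mul_mul_idem he' b)
  have hκ : ∼b ⊹ e ⊡ b ⊹ (∼b ⊹ e ⊡ b) = ∼b ⊹ e ⊡ b :=
    calc ∼b ⊹ e ⊡ b ⊹ (∼b ⊹ e ⊡ b)
        = ∼b ⊹ (b ⊡ (b⁻ ⊡ e ⊡ b) ⊹ ∼b ⊹ b ⊡ (b⁻ ⊡ e ⊡ b)) := by
          rw [W.mul_inv_mul_mul he']; simp only [W.add_assoc]
      _ = ∼b ⊹ e ⊡ b := by rw [← W.distrib, hf, W.mul_inv_mul_mul he']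
  have hsum : e ⊡ b = ∼b ⊹ e ⊡ b ⊹ b := by
    rw [W.idem_add_comm hκ b, ← W.mul_inv_mul_mul he' b, W.add_neg_add_mul]
  have hunit : ∼b ⊹ e ⊡ b ⊹ (∼b ⊹ b) = e ⊹ (∼b ⊹ b) :=
    calc ∼b ⊹ e ⊡ b ⊹ (∼b ⊹ b) = ∼(e ⊡ b) ⊹ e ⊡ b := by
          rw [hsum, W.neg_add_add, W.neg_eq_self hκ, hκ, ← hsum]
      _ = e ⊹ (∼b ⊹ b) := by
          rw [← W.mul_inv_eq, W.mul_mul_inv_of_idem he', W.mul_inv_eq,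
            W.mul_eq_add_of_idem he (W.neg_add_idem b)]
  calc e ⊡ b = ∼b ⊹ e ⊡ b ⊹ (∼b ⊹ b) ⊹ b := by
        rw [W.add_assoc _ (∼b ⊹ b), W.neg_add_self_add, ← hsum]
    _ = e ⊹ b := by rw [hunit, W.add_assoc, W.neg_add_self_add]

theorem mul_inv_mul_eq_add (c p : S) : c ⊡ c⁻ ⊡ p = ∼c ⊹ c ⊹ p := by
  rw [W.mul_inv_eq, W.idem_mul_eq_add (W.neg_add_idem c)]

theorem mul_mul_inv (a b : S) : a ⊡ b ⊡ b⁻ = a ⊹ (∼(a ⊡ b) ⊹ a ⊡ b) := by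
  rw [W.mul_mul_inv_eq, W.mul_inv_mul_eq_add, W.idem_add_comm (W.neg_add_idem _)]

theorem inv_mul_inv_add_mul (a b : S) : (a ⊡ (a⁻ ⊹ b))⁻ ⊡ (a ⊡ b) = (a⁻ ⊹ b)⁻ ⊡ b := by
  have he : a⁻ ⊡ a ⊹ a⁻ ⊡ a = a⁻ ⊡ a := W.add_self_of_mul_self (W.inv_mul_idem a)
  calc (a ⊡ (a⁻ ⊹ b))⁻ ⊡ (a ⊡ b) = (a⁻ ⊹ b)⁻ ⊡ (a⁻ ⊡ a ⊹ b) := by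
        rw [W.mul_inv_rev, W.mul_assoc, ← W.mul_assoc a⁻ a b, W.idem_mul_eq_add he]
    _ = (a⁻ ⊹ b)⁻ ⊡ (∼(a⁻ ⊹ b) ⊹ (a⁻ ⊹ b) ⊹ b) := by
        rw [W.neg_add_add, ← W.inv_mul_eq, W.add_assoc _ (∼b ⊹ b), W.neg_add_self_add]
    _ = (a⁻ ⊹ b)⁻ ⊡ b := by
        rw [← W.mul_inv_mul_eq_add, ← W.mul_assoc, ← W.mul_assoc, W.inv_mul_inv]

theorem neg_add_self_add_neg_add_mul (a b : S) :
    ∼a ⊹ a ⊹ (∼(a ⊡ b) ⊹ a ⊡ b) = ∼(a ⊡ b) ⊹ a ⊡ b := by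
  rw [← W.add_assoc, W.idem_add_comm (W.neg_add_idem a), W.add_assoc, W.neg_add_self_add_mul]

theorem neg_add_self_neg_add_mul (a b : S) :
    ∼(∼a ⊹ a ⊡ b) ⊹ (∼a ⊹ a ⊡ b) = ∼(a ⊡ b) ⊹ a ⊡ b := by
  rw [W.neg_add_add, W.neg_neg, W.add_neg_eq_neg_add, W.neg_add_self_add_neg_add_mul]

theorem neg_add_self_mul_add_neg (a b : S) :
    ∼(a ⊡ b ⊹ ∼a) ⊹ (a ⊡ b ⊹ ∼a) = ∼(a ⊡ b) ⊹ a ⊡ b := by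
  rw [W.neg_add_add, W.neg_neg, W.add_neg_eq_neg_add, W.idem_add_comm (W.neg_add_idem _),
    W.neg_add_self_add_neg_add_mul]

def solution (x : S × S) : S × S := (x.1 ⊡ (x.1⁻ ⊹ x.2), (x.1⁻ ⊹ x.2)⁻ ⊡ x.2)

def solutionOp (x : S × S) : S × S := (x.1 ⊡ x.2 ⊹ ∼x.1, (x.1 ⊡ x.2 ⊹ ∼x.1)⁻ ⊡ x.1 ⊡ x.2)

/-- When `-c + c = -p + p`, the two components of `(c, c⁻ ∘ p)` multiply to `p`. -/
def pairOfProd (c p : S) : S × S := (c, c⁻ ⊡ p)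

theorem solution_eq (a b : S) : W.solution (a, b) = W.pairOfProd (∼a ⊹ a ⊡ b) (a ⊡ b) := by
  rw [solution, pairOfProd, ← W.mul_inv_add_s15, W.inv_mul_inv_add_mul]

theorem solutionOp_eq (a b : S) : W.solutionOp (a, b) = W.pairOfProd (a ⊡ b ⊹ ∼a) (a ⊡ b) :=
  Prod.ext rfl (W.mul_assoc _ _ _)

theorem mul_inv_mul_of_neg_add_eq {c p : S} (hc : ∼c ⊹ c = ∼p ⊹ p) : c ⊡ (c⁻ ⊡ p) = p := by
  rw [← W.mul_assoc, W.mul_inv_mul_eq_add, hc, W.neg_add_self_add]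

theorem solution_pairOfProd {c p : S} (hc : ∼c ⊹ c = ∼p ⊹ p) :
    W.solution (W.pairOfProd c p) = W.pairOfProd (∼c ⊹ p) p := by
  rw [pairOfProd, solution_eq, W.mul_inv_mul_of_neg_add_eq hc]

theorem solutionOp_pairOfProd {c p : S} (hc : ∼c ⊹ c = ∼p ⊹ p) :
    W.solutionOp (W.pairOfProd c p) = W.pairOfProd (p ⊹ ∼c) p := by
  rw [pairOfProd, solutionOp_eq, W.mul_inv_mul_of_neg_add_eq hc]

theorem solution_solutionOp (a b : S) :
    W.solution (W.solutionOp (a, b)) = W.pairOfProd (a ⊹ (∼(a ⊡ b) ⊹ a ⊡ b)) (a ⊡ b) := by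
  rw [solutionOp_eq, W.solution_pairOfProd (W.neg_add_self_mul_add_neg a b), W.neg_add_rev,
    W.neg_neg, W.add_assoc]

theorem solutionOp_solution (a b : S) :
    W.solutionOp (W.solution (a, b)) = W.pairOfProd (a ⊹ (∼(a ⊡ b) ⊹ a ⊡ b)) (a ⊡ b) := by
  rw [solution_eq, W.solutionOp_pairOfProd (W.neg_add_self_neg_add_mul a b), W.neg_add_rev,
    W.neg_neg, ← W.add_assoc, W.add_neg_eq_neg_add, W.idem_add_comm (W.neg_add_idem _)]

theorem solution_comp_solutionOp : W.solution ∘ W.solutionOp = W.solutionOp ∘ W.solution :=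
  funext fun ⟨a, b⟩ => (W.solution_solutionOp a b).trans (W.solutionOp_solution a b).symm

theorem solution_solutionOp_pairOfProd {c p : S} (hc : ∼c ⊹ c = ∼p ⊹ p) :
    W.solution (W.solutionOp (W.pairOfProd c p)) = W.pairOfProd c p := by
  rw [pairOfProd, solution_solutionOp, W.mul_inv_mul_of_neg_add_eq hc, ← hc, ← W.add_assoc,
    W.add_neg_add]
  rfl

theorem solution_comp_solutionOp_comp_solution :
    W.solution ∘ W.solutionOp ∘ W.solution = W.solution := by
  funext ⟨a, b⟩
  simp only [Function.comp_apply, solution_eq]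
  exact W.solution_solutionOp_pairOfProd (W.neg_add_self_neg_add_mul a b)

theorem solutionOp_comp_solution_comp_solutionOp :
    W.solutionOp ∘ W.solution ∘ W.solutionOp = W.solutionOp := by
  funext ⟨a, b⟩
  rw [← Function.comp_assoc, ← W.solution_comp_solutionOp]
  simp only [Function.comp_apply, solutionOp_eq]
  exact W.solution_solutionOp_pairOfProd (W.neg_add_self_mul_add_neg a b)

theorem solution_solutionOp_eq (a b : S) :
    W.solution (W.solutionOp (a, b)) = (a ⊡ b ⊡ b⁻, a⁻ ⊡ a ⊡ b) := by
  rw [solution_solutionOp, pairOfProd, ← W.mul_mul_inv, W.inv_mul_mul_inv_mul]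

end WeakBrace

theorem weakBrace_r_completely_regular {S : Type*} (W : WeakBrace S) :
    let r : S × S → S × S := fun p =>
      (W.mul p.1 (W.add (W.inv p.1) p.2), W.mul (W.inv (W.add (W.inv p.1) p.2)) p.2)
    let rop : S × S → S × S := fun p =>
      (W.add (W.mul p.1 p.2) (W.neg p.1),
       W.mul (W.mul (W.inv (W.add (W.mul p.1 p.2) (W.neg p.1))) p.1) p.2)
    r ∘ rop ∘ r = r ∧ rop ∘ r ∘ rop = rop ∧ r ∘ rop = rop ∘ r ∧
      ∀ a b : S, (r ∘ rop) (a, b)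
        = (W.mul (W.mul a b) (W.inv b), W.mul (W.mul (W.inv a) a) b) :=
  ⟨W.solution_comp_solutionOp_comp_solution, W.solutionOp_comp_solution_comp_solutionOp,
    W.solution_comp_solutionOp, W.solution_solutionOp_eq⟩
end
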